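/- arXiv:1804.08518 — 2 statements merged into one kernel-verified Lean document; each statement's English description precedes it below -/
import Mathlib

section
/- Let T and H be bounded operators on a Hilbert space with T strictly positive (positive and invertible). If T - H H* is strictly positive, then the operator H* T⁻¹ H is a strict contraction, and hence I - H* T⁻¹ H is strictly positive (in particular invertible). -/
/-!
Strict positivity of `T - H₀H₀*` gives `H₀H₀* ≤ T - c ≤ r • T` for some `0 ≤ r < 1`.
Conjugating by `T⁻¹H₀` turns this into `A * A ≤ r • A` for the positive operator
`A = H₀*T⁻¹H₀`, and the C⋆-identity `‖A‖² = ‖A * A‖` together with monotonicity of the norm on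
positive elements gives `‖A‖ ≤ r`. Invertibility of `1 - A` is then the Neumann series.
-/

open ContinuousLinearMap

theorem nonneg_of_mul_eq_one {R : Type*} [Ring R] [PartialOrder R] [StarRing R]
    [StarOrderedRing R] {a b : R} (ha : 0 ≤ a) (hab : a * b = 1) : 0 ≤ b := by
  have hba : star b * a = 1 := by
    rw [← ha.isSelfAdjoint.star_eq, ← star_mul, hab, star_one]
  -- `b = star b * a * b` is a conjugate of `a`
  simpa [hba] using star_left_conjugate_nonneg ha b

section CStarAlgebra

variable {A : Type*} [CStarAlgebra A] [PartialOrder A] [StarOrderedRing A]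

theorem IsStrictlyPositive.exists_pos_algebraMap_le {a : A} (ha : IsStrictlyPositive a) :
    ∃ c > 0, algebraMap ℝ A c ≤ a := by
  rcases subsingleton_or_nontrivial A with hA | hA
  · exact ⟨1, one_pos, (Subsingleton.elim _ _ : algebraMap ℝ A 1 = a).le⟩
  · exact (CFC.exists_pos_algebraMap_le_iff ha.isSelfAdjoint).2 fun _ hx ↦ ha.spectrum_pos hx

theorem IsStrictlyPositive.exists_lt_one_le_smul_of_sub {a b : A} (hb : 0 ≤ b)
    (hab : IsStrictlyPositive (b - a)) : ∃ r ∈ Set.Ico (0 : ℝ) 1, a ≤ r • b := by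
  obtain ⟨c, hc, hcab⟩ := hab.exists_pos_algebraMap_le
  have hbc : 0 < ‖b‖ + c := by positivity
  refine ⟨‖b‖ / (‖b‖ + c), ⟨by positivity, (div_lt_one hbc).2 (by linarith)⟩, ?_⟩
  have hs : 1 - ‖b‖ / (‖b‖ + c) = c / (‖b‖ + c) := by field_simp; ring
  suffices (c / (‖b‖ + c)) • b ≤ b - a by
    rwa [← hs, sub_smul, one_smul, sub_le_sub_iff_left] at this
  calc (c / (‖b‖ + c)) • b ≤ (c / (‖b‖ + c)) • algebraMap ℝ A ‖b‖ :=
        smul_le_smul_of_nonneg_left hb.isSelfAdjoint.le_algebraMap_norm_self (by positivity)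
    _ = algebraMap ℝ A (c / (‖b‖ + c) * ‖b‖) := by rw [map_mul, Algebra.smul_def]
    _ ≤ algebraMap ℝ A c := by
        refine algebraMap_mono A ?_
        rw [div_mul_eq_mul_div, div_le_iff₀ hbc]
        nlinarith [norm_nonneg b]
    _ ≤ b - a := hcab

theorem CStarAlgebra.norm_le_of_mul_self_le_smul {a : A} {r : ℝ} (ha : 0 ≤ a) (hr : 0 ≤ r)
    (h : a * a ≤ r • a) : ‖a‖ ≤ r := by
  have hsq : ‖a‖ ^ 2 ≤ r * ‖a‖ := by
    calc ‖a‖ ^ 2 = ‖a * a‖ := ha.isSelfAdjoint.norm_mul_self.symm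
      _ ≤ ‖r • a‖ := CStarAlgebra.norm_le_norm_of_nonneg_of_le
          (by simpa [ha.isSelfAdjoint.star_eq] using star_mul_self_nonneg a) h
      _ = r * ‖a‖ := by rw [norm_smul, Real.norm_of_nonneg hr]
  nlinarith [norm_nonneg a]

theorem IsSelfAdjoint.isStrictlyPositive_one_sub {a : A} (ha : IsSelfAdjoint a) (h : ‖a‖ < 1) :
    IsStrictlyPositive (1 - a) :=
  (Units.oneSub a h).isUnit.isStrictlyPositive <| sub_nonneg.2 <|
    ha.le_algebraMap_norm_self.trans <| by simpa using algebraMap_mono A h.le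

end CStarAlgebra

namespace ContinuousLinearMap

variable {H K : Type*} [NormedAddCommGroup H] [InnerProductSpace ℂ H] [CompleteSpace H]
  [NormedAddCommGroup K] [InnerProductSpace ℂ K] [CompleteSpace K]

theorem adjoint_conj_mono {X Y : H →L[ℂ] H} (hXY : X ≤ Y) (B : K →L[ℂ] H) :
    B.adjoint ∘L X ∘L B ≤ B.adjoint ∘L Y ∘L B := by
  rw [le_def] at hXY ⊢
  simpa [sub_comp, comp_sub] using hXY.adjoint_conj B

theorem adjoint_conj_nonneg {X : H →L[ℂ] H} (hX : 0 ≤ X) (B : K →L[ℂ] H) :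
    0 ≤ B.adjoint ∘L X ∘L B := by
  simpa using adjoint_conj_mono hX B

theorem norm_adjoint_comp_comp_lt_one {T T' : H →L[ℂ] H} {H₀ : K →L[ℂ] H} (hT : 0 ≤ T)
    (hTT' : T * T' = 1) (hS : IsStrictlyPositive (T - H₀ ∘L H₀.adjoint)) :
    ‖H₀.adjoint ∘L T' ∘L H₀‖ < 1 := by
  obtain ⟨r, ⟨hr₀, hr₁⟩, hle⟩ := hS.exists_lt_one_le_smul_of_sub hT
  have hT' : 0 ≤ T' := nonneg_of_mul_eq_one hT hTT'
  have hconj : ∀ X : H →L[ℂ] H, (T' ∘L H₀).adjoint ∘L X ∘L T' ∘L H₀ =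
      H₀.adjoint ∘L T' ∘L X ∘L T' ∘L H₀ := fun X ↦ by
    rw [adjoint_comp, hT'.isSelfAdjoint.adjoint_eq]; rfl
  have hA : 0 ≤ H₀.adjoint ∘L T' ∘L H₀ := adjoint_conj_nonneg hT' H₀
  have hsq : (H₀.adjoint ∘L T' ∘L H₀) * (H₀.adjoint ∘L T' ∘L H₀) ≤
      r • (H₀.adjoint ∘L T' ∘L H₀) := by
    have hTT'H₀ : T ∘L T' ∘L H₀ = H₀ := by rw [← comp_assoc, ← mul_def, hTT', one_def, id_comp]
    have := adjoint_conj_mono hle (T' ∘L H₀)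
    rw [hconj, hconj] at this
    simpa only [mul_def, comp_assoc, smul_comp, comp_smul, hTT'H₀] using this
  exact (CStarAlgebra.norm_le_of_mul_self_le_smul hA hr₀ hsq).trans_lt hr₁

end ContinuousLinearMap

theorem stmt2_general {H K : Type*} [NormedAddCommGroup H] [InnerProductSpace ℂ H]
    [CompleteSpace H] [NormedAddCommGroup K] [InnerProductSpace ℂ K] [CompleteSpace K]
    (T T' : H →L[ℂ] H) (H₀ : K →L[ℂ] H)
    (hTpos : T.IsPositive) (hT1 : T ∘L T' = 1)
    (hpos : (T - H₀ ∘L H₀.adjoint).IsPositive)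
    (hinv : ∃ S : H →L[ℂ] H, (T - H₀ ∘L H₀.adjoint) ∘L S = 1 ∧
      S ∘L (T - H₀ ∘L H₀.adjoint) = 1) :
    ‖H₀.adjoint ∘L T' ∘L H₀‖ < 1 ∧
      (1 - H₀.adjoint ∘L T' ∘L H₀).IsPositive ∧
      ∃ V : K →L[ℂ] K, (1 - H₀.adjoint ∘L T' ∘L H₀) ∘L V = 1 ∧
        V ∘L (1 - H₀.adjoint ∘L T' ∘L H₀) = 1 := by
  have hT : 0 ≤ T := (nonneg_iff_isPositive T).2 hTpos
  have hS : IsStrictlyPositive (T - H₀ ∘L H₀.adjoint) :=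
    (isUnit_iff_exists.2 hinv).isStrictlyPositive ((nonneg_iff_isPositive _).2 hpos)
  have hnorm := norm_adjoint_comp_comp_lt_one hT hT1 hS
  have hA : IsSelfAdjoint (H₀.adjoint ∘L T' ∘L H₀) :=
    (adjoint_conj_nonneg (nonneg_of_mul_eq_one hT hT1) H₀).isSelfAdjoint
  have hOneSub := hA.isStrictlyPositive_one_sub hnorm
  exact ⟨hnorm, (nonneg_iff_isPositive _).1 hOneSub.nonneg, isUnit_iff_exists.1 hOneSub.isUnit⟩

/-- If `T` is strictly positive and `T - H₀ H₀*` is strictly positive, then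
`H₀* T⁻¹ H₀` is a strict contraction, hence `I - H₀* T⁻¹ H₀` is strictly positive. -/
theorem stmt2 {H K : Type*} [NormedAddCommGroup H] [InnerProductSpace ℂ H]
    [CompleteSpace H] [NormedAddCommGroup K] [InnerProductSpace ℂ K] [CompleteSpace K]
    (T T' : H →L[ℂ] H) (H₀ : K →L[ℂ] H)
    (hTpos : T.IsPositive) (hT1 : T ∘L T' = 1) (hT2 : T' ∘L T = 1)
    (hpos : (T - H₀ ∘L H₀.adjoint).IsPositive)
    (hinv : ∃ S : H →L[ℂ] H, (T - H₀ ∘L H₀.adjoint) ∘L S = 1 ∧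
      S ∘L (T - H₀ ∘L H₀.adjoint) = 1) :
    ‖H₀.adjoint ∘L T' ∘L H₀‖ < 1 ∧
      (1 - H₀.adjoint ∘L T' ∘L H₀).IsPositive ∧
      ∃ V : K →L[ℂ] K, (1 - H₀.adjoint ∘L T' ∘L H₀) ∘L V = 1 ∧
        V ∘L (1 - H₀.adjoint ∘L T' ∘L H₀) = 1 :=
  stmt2_general T T' H₀ hTpos hT1 hpos hinv
end

section
/- Let k ∈ L¹(ℝ₊) and define the Hankel operator H on L²(ℝ₊) by (H f)(t) = ∫₀^∞ k(t+τ) f(τ) dτ. Then H is the limit in operator norm of a sequence of finite-rank operators. -/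
/-!
By Schur's test, the Hankel operator with kernel `g(t + τ)`, `g ∈ L¹(ℝ₊)`, has norm at most
`‖g‖₁`: every row and every column of the kernel has `L¹` norm at most `‖g‖₁`.
The kernel `e^{-(j+1)(t+τ)} = e^{-(j+1)t} e^{-(j+1)τ}` gives a rank-one operator, and the
exponential sums `∑ cⱼ e^{-(j+1)s}` are dense in `L¹(ℝ₊)`: after the substitution `x = e^{-s}`
this is the Weierstrass theorem on `[0, 1]`, applied to `g(-log x) / x` for a compactly supported
continuous `g`. Hence `H` lies within `‖k - h‖₁` of a finite-rank operator for an exponential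
sum `h` that is as close to `k` as we like.
-/

open MeasureTheory Set Filter Function Polynomial
open scoped ENNReal NNReal Topology

section SchurTest

variable {α β : Type*} [MeasurableSpace α] [MeasurableSpace β] {μ : Measure α} {ν : Measure β}

theorem ENNReal.sq_lintegral_mul_le {w f : α → ℝ≥0∞}
    (hw : AEMeasurable w μ) (hf : AEMeasurable f μ) :
    (∫⁻ a, w a * f a ∂μ) ^ 2 ≤ (∫⁻ a, w a ∂μ) * ∫⁻ a, w a * f a ^ 2 ∂μ := by
  have sqrt_sq : ∀ x : ℝ≥0∞, (x ^ (1 / 2 : ℝ)) ^ 2 = x := fun x => by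
    rw [← ENNReal.rpow_natCast, ← ENNReal.rpow_mul]; norm_num
  have hCS := ENNReal.lintegral_mul_norm_pow_le hw (hw.mul (hf.pow_const 2))
    (p := 1 / 2) (q := 1 / 2) (by norm_num) (by norm_num) (by norm_num)
  have hpt : ∀ a, w a ^ (1 / 2 : ℝ) * (w a * f a ^ 2) ^ (1 / 2 : ℝ) = w a * f a := fun a => by
    rw [ENNReal.mul_rpow_of_nonneg _ _ (by norm_num), ← mul_assoc,
      ← ENNReal.rpow_add_of_nonneg _ _ (by norm_num) (by norm_num), ← ENNReal.rpow_natCast,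
      ← ENNReal.rpow_mul]
    norm_num
  simp only [Pi.mul_apply, hpt] at hCS
  calc (∫⁻ a, w a * f a ∂μ) ^ 2
      ≤ ((∫⁻ a, w a ∂μ) ^ (1 / 2 : ℝ) * (∫⁻ a, w a * f a ^ 2 ∂μ) ^ (1 / 2 : ℝ)) ^ 2 := by gcongr
    _ = _ := by rw [mul_pow, sqrt_sq, sqrt_sq]

theorem AEMeasurable.ae_aemeasurable_of_uncurry [SFinite ν] {f : α → β → ℝ≥0∞}
    (hf : AEMeasurable (uncurry f) (μ.prod ν)) : ∀ᵐ x ∂μ, AEMeasurable (f x) ν :=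
  hf.aestronglyMeasurable.prodMk_left.mono fun _ h => h.aemeasurable

theorem lintegral_sq_lintegral_kernel_mul_le [SFinite μ] [SFinite ν] {K : α → β → ℝ≥0∞}
    (hK : AEMeasurable (uncurry K) (μ.prod ν)) {f : β → ℝ≥0∞} (hf : AEMeasurable f ν)
    {C : ℝ≥0∞} (hrow : ∀ᵐ t ∂μ, ∫⁻ τ, K t τ ∂ν ≤ C) (hcol : ∀ᵐ τ ∂ν, ∫⁻ t, K t τ ∂μ ≤ C) :
    ∫⁻ t, (∫⁻ τ, K t τ * f τ ∂ν) ^ 2 ∂μ ≤ C ^ 2 * ∫⁻ τ, f τ ^ 2 ∂ν := by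
  have hKf : AEMeasurable (uncurry fun t τ => K t τ * f τ ^ 2) (μ.prod ν) :=
    hK.mul (hf.pow_const 2).comp_snd
  calc ∫⁻ t, (∫⁻ τ, K t τ * f τ ∂ν) ^ 2 ∂μ
      ≤ ∫⁻ t, C * ∫⁻ τ, K t τ * f τ ^ 2 ∂ν ∂μ := by
        refine lintegral_mono_ae ?_
        filter_upwards [hrow, hK.ae_aemeasurable_of_uncurry] with t ht hKt
        exact (ENNReal.sq_lintegral_mul_le hKt hf).trans
          (mul_le_mul_left ht _)
    _ = C * ∫⁻ τ, ∫⁻ t, K t τ * f τ ^ 2 ∂μ ∂ν := by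
        rw [lintegral_const_mul'' C ?_, lintegral_lintegral_swap hKf]
        exact hKf.lintegral_prod_right'
    _ ≤ C * ∫⁻ τ, C * f τ ^ 2 ∂ν := by
        gcongr 1
        refine lintegral_mono_ae ?_
        filter_upwards [hcol, hK.prod_swap.ae_aemeasurable_of_uncurry (f := fun τ t => K t τ)]
          with τ hτ hKτ
        rw [lintegral_mul_const'' _ hKτ]
        exact mul_le_mul_left hτ _
    _ = C ^ 2 * ∫⁻ τ, f τ ^ 2 ∂ν := by
        rw [lintegral_const_mul'' C (hf.pow_const 2), ← mul_assoc, sq]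

theorem eLpNorm_two_sq {E : Type*} [NormedAddCommGroup E] (f : α → E) :
    eLpNorm f 2 μ ^ 2 = ∫⁻ a, ‖f a‖ₑ ^ 2 ∂μ := by
  simpa using eLpNorm_nnreal_pow_eq_lintegral (μ := μ) (f := f) (p := 2) two_ne_zero

theorem lintegral_sq_lintegral_enorm_kernel_mul_le [SFinite μ] [SFinite ν] {K : α → β → ℂ}
    (hK : AEStronglyMeasurable (uncurry K) (μ.prod ν)) {C : ℝ≥0∞}
    (hrow : ∀ᵐ t ∂μ, ∫⁻ τ, ‖K t τ‖ₑ ∂ν ≤ C) (hcol : ∀ᵐ τ ∂ν, ∫⁻ t, ‖K t τ‖ₑ ∂μ ≤ C)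
    {f : β → ℂ} (hf : AEStronglyMeasurable f ν) :
    ∫⁻ t, (∫⁻ τ, ‖K t τ * f τ‖ₑ ∂ν) ^ 2 ∂μ ≤ C ^ 2 * eLpNorm f 2 ν ^ 2 := by
  simpa only [enorm_mul, eLpNorm_two_sq] using
    lintegral_sq_lintegral_kernel_mul_le hK.enorm hf.enorm hrow hcol

theorem eLpNorm_integral_kernel_mul_le [SFinite μ] [SFinite ν] {K : α → β → ℂ}
    (hK : AEStronglyMeasurable (uncurry K) (μ.prod ν)) {C : ℝ≥0∞}
    (hrow : ∀ᵐ t ∂μ, ∫⁻ τ, ‖K t τ‖ₑ ∂ν ≤ C) (hcol : ∀ᵐ τ ∂ν, ∫⁻ t, ‖K t τ‖ₑ ∂μ ≤ C)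
    {f : β → ℂ} (hf : AEStronglyMeasurable f ν) :
    eLpNorm (fun t => ∫ τ, K t τ * f τ ∂ν) 2 μ ≤ C * eLpNorm f 2 ν := by
  refine (ENNReal.pow_le_pow_left_iff two_ne_zero).1 ?_
  calc eLpNorm (fun t => ∫ τ, K t τ * f τ ∂ν) 2 μ ^ 2
      ≤ ∫⁻ t, (∫⁻ τ, ‖K t τ * f τ‖ₑ ∂ν) ^ 2 ∂μ := by
        rw [eLpNorm_two_sq]
        gcongr with t
        exact enorm_integral_le_lintegral_enorm _
    _ ≤ (C * eLpNorm f 2 ν) ^ 2 := by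
        rw [mul_pow]
        exact lintegral_sq_lintegral_enorm_kernel_mul_le hK hrow hcol hf

theorem ae_integrable_kernel_mul [SFinite μ] [SFinite ν] {K : α → β → ℂ}
    (hK : AEStronglyMeasurable (uncurry K) (μ.prod ν)) {C : ℝ≥0∞} (hC : C ≠ ∞)
    (hrow : ∀ᵐ t ∂μ, ∫⁻ τ, ‖K t τ‖ₑ ∂ν ≤ C) (hcol : ∀ᵐ τ ∂ν, ∫⁻ t, ‖K t τ‖ₑ ∂μ ≤ C)
    {f : β → ℂ} (hf : MemLp f 2 ν) :
    ∀ᵐ t ∂μ, Integrable (fun τ => K t τ * f τ) ν := by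
  have hfin : ∫⁻ t, (∫⁻ τ, ‖K t τ * f τ‖ₑ ∂ν) ^ 2 ∂μ ≠ ∞ :=
    ne_top_of_le_ne_top (by finiteness)
      (lintegral_sq_lintegral_enorm_kernel_mul_le hK hrow hcol hf.1)
  have hmeas : AEMeasurable (fun t => (∫⁻ τ, ‖K t τ * f τ‖ₑ ∂ν) ^ 2) μ :=
    ((hK.mul hf.1.comp_snd).enorm.lintegral_prod_right').pow_const 2
  filter_upwards [ae_lt_top' hmeas hfin, hK.prodMk_left] with t ht hKt
  exact ⟨hKt.mul hf.1,
    hasFiniteIntegral_iff_enorm.2 ((ENNReal.pow_lt_top_iff.1 ht).resolve_right two_ne_zero)⟩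

end SchurTest

theorem Lp.opNorm_le_of_eLpNorm_le {α β 𝕜 E F : Type*} [MeasurableSpace α] [MeasurableSpace β]
    {μ : Measure α} {ν : Measure β} [NontriviallyNormedField 𝕜] [NormedAddCommGroup E]
    [NormedSpace 𝕜 E] [NormedAddCommGroup F] [NormedSpace 𝕜 F] {p q : ℝ≥0∞} [Fact (1 ≤ p)]
    [Fact (1 ≤ q)] {T : Lp E p μ →L[𝕜] Lp F q ν} {C : ℝ} (hC : 0 ≤ C)
    (hT : ∀ f, eLpNorm (T f) q ν ≤ ENNReal.ofReal C * eLpNorm f p μ) : ‖T‖ ≤ C := by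
  refine ContinuousLinearMap.opNorm_le_bound _ hC fun f => ?_
  rw [Lp.norm_def, Lp.norm_def, ← ENNReal.toReal_ofReal hC, ← ENNReal.toReal_mul]
  exact ENNReal.toReal_mono (ENNReal.mul_ne_top ENNReal.ofReal_ne_top (Lp.eLpNorm_ne_top f)) (hT f)

theorem finiteDimensional_range_sum_smulRight {𝕜 E F ι : Type*} [NontriviallyNormedField 𝕜]
    [NormedAddCommGroup E] [NormedSpace 𝕜 E] [NormedAddCommGroup F] [NormedSpace 𝕜 F]
    (s : Finset ι) (φ : ι → E →L[𝕜] 𝕜) (v : ι → F) :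
    FiniteDimensional 𝕜 (LinearMap.range
      ((∑ i ∈ s, (φ i).smulRight (v i) : E →L[𝕜] F) : E →ₗ[𝕜] F)) := by
  have := FiniteDimensional.span_of_finite 𝕜 (s.finite_toSet.image v)
  refine Submodule.finiteDimensional_of_le (S₂ := Submodule.span 𝕜 (v '' s)) ?_
  rintro _ ⟨x, rfl⟩
  change (∑ i ∈ s, (φ i).smulRight (v i)) x ∈ _
  rw [sum_apply]
  exact Submodule.sum_mem _ fun i hi => Submodule.smul_mem _ _ (Submodule.subset_span ⟨i, hi, rfl⟩)

theorem exists_complex_polynomial_near_of_continuousOn (a b : ℝ) {f : ℝ → ℂ}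
    (hf : ContinuousOn f (Icc a b)) {ε : ℝ} (hε : 0 < ε) :
    ∃ p : ℂ[X], ∀ x ∈ Icc a b, ‖p.eval (x : ℂ) - f x‖ < ε := by
  obtain ⟨p, hp⟩ := exists_polynomial_near_of_continuousOn a b (fun x => (f x).re)
    (Complex.continuous_re.comp_continuousOn hf) (ε / 2) (half_pos hε)
  obtain ⟨q, hq⟩ := exists_polynomial_near_of_continuousOn a b (fun x => (f x).im)
    (Complex.continuous_im.comp_continuousOn hf) (ε / 2) (half_pos hε)
  refine ⟨p.map Complex.ofRealHom + C Complex.I * q.map Complex.ofRealHom, fun x hx => ?_⟩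
  have heval (r : ℝ[X]) : (r.map Complex.ofRealHom).eval (x : ℂ) = ((r.eval x : ℝ) : ℂ) := by
    rw [eval_map, ← Complex.ofRealHom_eq_coe, eval₂_at_apply]; rfl
  have hre : (eval (x : ℂ) (p.map Complex.ofRealHom + C Complex.I * q.map Complex.ofRealHom)
      - f x).re = p.eval x - (f x).re := by simp [heval]
  have him : (eval (x : ℂ) (p.map Complex.ofRealHom + C Complex.I * q.map Complex.ofRealHom)
      - f x).im = q.eval x - (f x).im := by simp [heval]
  calc _ ≤ _ := Complex.norm_le_abs_re_add_abs_im _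
    _ < ε / 2 + ε / 2 := by rw [hre, him]; exact add_lt_add (hp x hx) (hq x hx)
    _ = ε := add_halves ε

/-- At `x = 0` the value is `g 0 / 0 = 0`, and the function vanishes near `0` because
`-Real.log x → ∞` there (on both sides, `Real.log` being even). -/
theorem continuous_comp_neg_log_div {g : ℝ → ℂ} (hg : Continuous g) (hg0 : g =ᶠ[atTop] 0) :
    Continuous fun x : ℝ => g (-Real.log x) / x := by
  refine continuous_iff_continuousAt.2 fun x => ?_
  rcases eq_or_ne x 0 with rfl | hx
  · rw [← continuousWithinAt_compl_self, ContinuousWithinAt, Real.log_zero, neg_zero,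
      Complex.ofReal_zero, div_zero]
    refine tendsto_const_nhds.congr' ?_
    filter_upwards [(tendsto_neg_atBot_atTop.comp Real.tendsto_log_nhdsNE_zero).eventually hg0]
      with y hy
    simp only [comp_apply, Pi.zero_apply] at hy
    rw [hy, zero_div]
  · exact ((hg.continuousAt.comp (Real.continuousAt_log hx).neg).div
      Complex.continuous_ofReal.continuousAt (by exact_mod_cast hx))

local notation "μ₊" => volume.restrict (Ici (0 : ℝ))

noncomputable def hankelIntegral (g f : ℝ → ℂ) (t : ℝ) : ℂ := ∫ τ in Ici 0, g (t + τ) * f τ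

theorem setLIntegral_Ici_comp_const_add_le (g : ℝ → ℝ≥0∞) {t : ℝ} (ht : 0 ≤ t) :
    ∫⁻ τ in Ici 0, g (t + τ) ≤ ∫⁻ s in Ici 0, g s := by
  rw [(measurePreserving_add_left volume t).setLIntegral_comp_emb
    (measurableEmbedding_addLeft t) g, image_const_add_Ici, add_zero]
  exact lintegral_mono_set (Ici_subset_Ici.2 ht)

theorem aestronglyMeasurable_hankelKernel {g : ℝ → ℂ} (hg : AEStronglyMeasurable g μ₊) :
    AEStronglyMeasurable (uncurry fun t τ => g (t + τ)) (μ₊.prod μ₊) := by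
  have hg' : AEStronglyMeasurable ((Ici 0).indicator g) volume :=
    (aestronglyMeasurable_indicator_iff measurableSet_Ici).2 hg
  have hK := hg'.comp_quasiMeasurePreserving (quasiMeasurePreserving_add volume volume)
  rw [Measure.prod_restrict]
  refine (hK.restrict (s := Ici 0 ×ˢ Ici 0)).congr ?_
  filter_upwards [ae_restrict_mem (measurableSet_Ici.prod measurableSet_Ici)] with p hp
  exact indicator_of_mem (mem_Ici.2 (add_nonneg hp.1 hp.2)) g

section Hankel

variable {g : ℝ → ℂ}

theorem ae_lintegral_hankelKernel_right_le :
    ∀ᵐ t ∂μ₊, ∫⁻ τ, ‖g (t + τ)‖ₑ ∂μ₊ ≤ ∫⁻ s in Ici 0, ‖g s‖ₑ := by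
  filter_upwards [ae_restrict_mem measurableSet_Ici] with t ht
  exact setLIntegral_Ici_comp_const_add_le _ ht

theorem ae_lintegral_hankelKernel_left_le :
    ∀ᵐ τ ∂μ₊, ∫⁻ t, ‖g (t + τ)‖ₑ ∂μ₊ ≤ ∫⁻ s in Ici 0, ‖g s‖ₑ := by
  simpa only [add_comm] using ae_lintegral_hankelKernel_right_le (g := g)

theorem eLpNorm_hankelIntegral_le (hg : AEStronglyMeasurable g μ₊) {f : ℝ → ℂ}
    (hf : AEStronglyMeasurable f μ₊) :
    eLpNorm (hankelIntegral g f) 2 μ₊ ≤ (∫⁻ s in Ici 0, ‖g s‖ₑ) * eLpNorm f 2 μ₊ :=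
  eLpNorm_integral_kernel_mul_le (aestronglyMeasurable_hankelKernel hg)
    ae_lintegral_hankelKernel_right_le ae_lintegral_hankelKernel_left_le hf

theorem ae_integrable_hankel (hg : IntegrableOn g (Ici 0)) {f : ℝ → ℂ} (hf : MemLp f 2 μ₊) :
    ∀ᵐ t ∂μ₊, Integrable (fun τ => g (t + τ) * f τ) μ₊ :=
  ae_integrable_kernel_mul (aestronglyMeasurable_hankelKernel hg.1) hg.2.ne
    ae_lintegral_hankelKernel_right_le ae_lintegral_hankelKernel_left_le hf

end Hankel

theorem hankelIntegral_sub {g₁ g₂ : ℝ → ℂ} (hg₁ : IntegrableOn g₁ (Ici 0))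
    (hg₂ : IntegrableOn g₂ (Ici 0)) {f : ℝ → ℂ} (hf : MemLp f 2 μ₊) :
    hankelIntegral (g₁ - g₂) f =ᵐ[μ₊] hankelIntegral g₁ f - hankelIntegral g₂ f := by
  filter_upwards [ae_integrable_hankel hg₁ hf, ae_integrable_hankel hg₂ hf] with t h₁ h₂
  simp only [hankelIntegral, Pi.sub_apply, sub_mul]
  exact integral_sub h₁ h₂

/-- `e^{-(j+1)s}`, written as a power of `e^{-s}` so that exponential sums become polynomials
in `e^{-s}`. -/
noncomputable def expDecay (j : ℕ) (s : ℝ) : ℂ := ↑(Real.exp (-s) ^ (j + 1))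

noncomputable def expSum (m : ℕ) (c : ℕ → ℂ) (s : ℝ) : ℂ := ∑ j ∈ Finset.range m, c j * expDecay j s

theorem expDecay_add (j : ℕ) (t τ : ℝ) : expDecay j (t + τ) = expDecay j t * expDecay j τ := by
  simp only [expDecay, neg_add, Real.exp_add, mul_pow, Complex.ofReal_mul]

theorem norm_expDecay (j : ℕ) (s : ℝ) : ‖expDecay j s‖ = Real.exp (-s) ^ (j + 1) := by
  rw [expDecay, Complex.norm_real, Real.norm_of_nonneg (by positivity)]

theorem continuous_expDecay (j : ℕ) : Continuous (expDecay j) := by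
  unfold expDecay; fun_prop

theorem integrableOn_expDecay (j : ℕ) : IntegrableOn (expDecay j) (Ici 0) := by
  have h := exp_neg_integrableOn_Ioi 0 (b := j + 1) (by positivity)
  rw [← integrableOn_Ici_iff_integrableOn_Ioi (by finiteness)] at h
  refine IntegrableOn.congr_fun (h.ofReal (𝕜 := ℂ)) (fun s _ => ?_) measurableSet_Ici
  rw [expDecay, ← Real.exp_nat_mul]
  congr 2
  push_cast
  ring

theorem memLp_expDecay (j : ℕ) : MemLp (expDecay j) 2 μ₊ := by
  refine (memLp_two_iff_integrable_sq_norm (continuous_expDecay j).aestronglyMeasurable).2 ?_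
  refine IntegrableOn.congr_fun (integrableOn_expDecay (2 * j + 1)).norm (fun s _ => ?_)
    measurableSet_Ici
  rw [norm_expDecay, norm_expDecay, ← pow_mul]
  ring_nf

theorem integrableOn_expSum (m : ℕ) (c : ℕ → ℂ) : IntegrableOn (expSum m c) (Ici 0) :=
  integrable_finsetSum _ fun j _ => (integrableOn_expDecay j).const_mul (c j)

theorem expSum_natDegree_succ_coeff (p : ℂ[X]) (s : ℝ) :
    expSum (p.natDegree + 1) p.coeff s = Real.exp (-s) * p.eval (Real.exp (-s) : ℂ) := by
  rw [eval_eq_sum_range, Finset.mul_sum]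
  refine Finset.sum_congr rfl fun j _ => ?_
  push_cast [expDecay]
  ring

theorem exists_expSum_near {g : ℝ → ℂ} (hg : Continuous g) (hg0 : g =ᶠ[atTop] 0) {δ : ℝ}
    (hδ : 0 < δ) : ∃ m c, ∀ s, 0 ≤ s → ‖g s - expSum m c s‖ ≤ δ * Real.exp (-s) := by
  obtain ⟨p, hp⟩ := exists_complex_polynomial_near_of_continuousOn 0 1
    (continuous_comp_neg_log_div hg hg0).continuousOn hδ
  refine ⟨p.natDegree + 1, p.coeff, fun s hs => ?_⟩
  have hx : Real.exp (-s) ∈ Icc (0 : ℝ) 1 :=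
    ⟨(Real.exp_pos _).le, Real.exp_le_one_iff.2 (neg_nonpos.2 hs)⟩
  have hgs : g s = Real.exp (-s) * (g (-Real.log (Real.exp (-s))) / Real.exp (-s)) := by
    rw [Real.log_exp, neg_neg, mul_div_cancel₀ _ (Complex.ofReal_ne_zero.2 (Real.exp_pos _).ne')]
  rw [expSum_natDegree_succ_coeff, hgs, ← mul_sub, norm_mul, norm_sub_rev, Complex.norm_real,
    Real.norm_of_nonneg (Real.exp_pos _).le, mul_comm]
  exact mul_le_mul_of_nonneg_right (hp _ hx).le (Real.exp_pos _).le

theorem setLIntegral_Ici_enorm_le_of_le_mul_exp {f : ℝ → ℂ} {δ : ℝ} (hδ : 0 ≤ δ)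
    (hf : ∀ s, 0 ≤ s → ‖f s‖ ≤ δ * Real.exp (-s)) :
    ∫⁻ s in Ici 0, ‖f s‖ₑ ≤ ENNReal.ofReal δ := by
  have hint : IntegrableOn (fun s => δ * Real.exp (-s)) (Ici 0) :=
    ((integrableOn_Ici_iff_integrableOn_Ioi (by finiteness)).2
      (integrableOn_exp_neg_Ioi 0)).const_mul δ
  calc ∫⁻ s in Ici 0, ‖f s‖ₑ ≤ ∫⁻ s in Ici 0, ENNReal.ofReal (δ * Real.exp (-s)) :=
        setLIntegral_mono' measurableSet_Ici fun s hs => by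
          rw [← ofReal_norm]; exact ENNReal.ofReal_le_ofReal (hf s hs)
    _ = ENNReal.ofReal (∫ s in Ici 0, δ * Real.exp (-s)) :=
        (ofReal_integral_eq_lintegral_ofReal hint
          (Eventually.of_forall fun s => by positivity)).symm
    _ = ENNReal.ofReal δ := by
        rw [integral_Ici_eq_integral_Ioi, integral_const_mul, integral_exp_neg_Ioi_zero, mul_one]

theorem exists_expSum_lintegral_sub_le {k : ℝ → ℂ} (hk : IntegrableOn k (Ici 0)) {ε : ℝ}
    (hε : 0 < ε) : ∃ m c, ∫⁻ s in Ici 0, ‖k s - expSum m c s‖ₑ ≤ ENNReal.ofReal ε := by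
  obtain ⟨g, hg_supp, hkg, hg, -⟩ :=
    (hk.integrable_indicator measurableSet_Ici).exists_hasCompactSupport_lintegral_sub_le
      (ENNReal.ofReal_pos.2 (half_pos hε)).ne'
  have hg0 : g =ᶠ[atTop] 0 := (hasCompactSupport_iff_eventuallyEq.1 hg_supp).filter_mono
    (coclosedCompact_eq_cocompact (X := ℝ) ▸ atTop_le_cocompact)
  obtain ⟨m, c, hmc⟩ := exists_expSum_near hg hg0 (half_pos hε)
  have hkg' : ∫⁻ s in Ici 0, ‖k s - g s‖ₑ ≤ ENNReal.ofReal (ε / 2) := by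
    calc ∫⁻ s in Ici 0, ‖k s - g s‖ₑ = ∫⁻ s in Ici 0, ‖(Ici 0).indicator k s - g s‖ₑ :=
          setLIntegral_congr_fun measurableSet_Ici fun s hs => by rw [indicator_of_mem hs]
      _ ≤ _ := (setLIntegral_le_lintegral _ _).trans hkg
  refine ⟨m, c, ?_⟩
  calc ∫⁻ s in Ici 0, ‖k s - expSum m c s‖ₑ
      ≤ ∫⁻ s in Ici 0, (‖k s - g s‖ₑ + ‖g s - expSum m c s‖ₑ) :=
        lintegral_mono fun s => by simpa only [edist_eq_enorm_sub] using edist_triangle _ (g s) _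
    _ = (∫⁻ s in Ici 0, ‖k s - g s‖ₑ) + ∫⁻ s in Ici 0, ‖g s - expSum m c s‖ₑ :=
        lintegral_add_left' (hk.1.sub hg.aestronglyMeasurable).enorm _
    _ ≤ ENNReal.ofReal (ε / 2) + ENNReal.ofReal (ε / 2) :=
        add_le_add hkg' (setLIntegral_Ici_enorm_le_of_le_mul_exp (half_pos hε).le hmc)
    _ = ENNReal.ofReal ε := by
        rw [← ENNReal.ofReal_add (half_pos hε).le (half_pos hε).le, add_halves]

noncomputable def expDecayLp (j : ℕ) : Lp ℂ 2 μ₊ := (memLp_expDecay j).toLp _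

theorem inner_expDecayLp (j : ℕ) (f : Lp ℂ 2 μ₊) :
    inner ℂ (expDecayLp j) f = ∫ τ in Ici 0, expDecay j τ * f τ := by
  rw [L2.inner_def]
  refine integral_congr_ae ?_
  filter_upwards [(memLp_expDecay j).coeFn_toLp] with τ hτ
  rw [RCLike.inner_apply, expDecayLp, hτ, expDecay, Complex.conj_ofReal, mul_comm]

noncomputable def expSumOp (m : ℕ) (c : ℕ → ℂ) : Lp ℂ 2 μ₊ →L[ℂ] Lp ℂ 2 μ₊ :=
  ∑ j ∈ Finset.range m, (c j • innerSL ℂ (expDecayLp j)).smulRight (expDecayLp j)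

theorem coeFn_expSumOp (m : ℕ) (c : ℕ → ℂ) (f : Lp ℂ 2 μ₊) :
    ⇑(expSumOp m c f) =ᵐ[μ₊] hankelIntegral (expSum m c) f := by
  have hrepr (t : ℝ) : hankelIntegral (expSum m c) f t =
      ∑ j ∈ Finset.range m, (c j * inner ℂ (expDecayLp j) f) * expDecay j t := by
    simp only [hankelIntegral, expSum, Finset.sum_mul, expDecay_add, inner_expDecayLp]
    rw [integral_finsetSum _ fun j _ =>
      (((memLp_expDecay j).integrable_mul (Lp.memLp f)).const_mul (c j * expDecay j t)).congr
        (Eventually.of_forall fun τ => by simp only [Pi.mul_apply]; ring)]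
    refine Finset.sum_congr rfl fun j _ => ?_
    rw [← integral_const_mul, ← integral_mul_const]
    exact integral_congr_ae (Eventually.of_forall fun τ => by ring)
  have happly : expSumOp m c f =
      ∑ j ∈ Finset.range m, (c j * inner ℂ (expDecayLp j) f) • expDecayLp j := by
    simp [expSumOp]
  filter_upwards [Lp.coeFn_fun_finsetSum (Finset.range m)
      (fun j => (c j * inner ℂ (expDecayLp j) f) • expDecayLp j),
    ae_all_iff.2 fun j => Lp.coeFn_smul (c j * inner ℂ (expDecayLp j) f) (expDecayLp j),
    ae_all_iff.2 fun j => (memLp_expDecay j).coeFn_toLp] with t hsum hsmul hexp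
  rw [happly, hsum, hrepr]
  refine Finset.sum_congr rfl fun j _ => ?_
  rw [hsmul j, Pi.smul_apply, smul_eq_mul, expDecayLp, hexp j]

theorem stmt8_general (k : ℝ → ℂ) (hk : Integrable k)
    (H : Lp ℂ 2 (volume.restrict (Ici (0:ℝ))) →L[ℂ] Lp ℂ 2 (volume.restrict (Ici (0:ℝ))))
    (hH : ∀ f : Lp ℂ 2 (volume.restrict (Ici (0:ℝ))),
      ⇑(H f) =ᵐ[volume.restrict (Ici (0:ℝ))]
        fun t => ∫ τ in Ici (0:ℝ), k (t + τ) * f τ) :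
    ∃ F : ℕ → (Lp ℂ 2 (volume.restrict (Ici (0:ℝ))) →L[ℂ]
        Lp ℂ 2 (volume.restrict (Ici (0:ℝ)))),
      (∀ n, FiniteDimensional ℂ (LinearMap.range ((F n : Lp ℂ 2 (volume.restrict (Ici (0:ℝ))) →ₗ[ℂ]
        Lp ℂ 2 (volume.restrict (Ici (0:ℝ))))))) ∧
      Tendsto (fun n => ‖H - F n‖) atTop (nhds 0) := by
  have hHF (m : ℕ) (c : ℕ → ℂ) (f : Lp ℂ 2 μ₊) :
      ⇑((H - expSumOp m c) f) =ᵐ[μ₊] hankelIntegral (k - expSum m c) f := by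
    filter_upwards [Lp.coeFn_sub (H f) (expSumOp m c f), hH f, coeFn_expSumOp m c f,
      hankelIntegral_sub hk.integrableOn (integrableOn_expSum m c) (Lp.memLp f)]
      with t hsub hHt hFt hkF
    rw [sub_apply, hsub, Pi.sub_apply, hHt, hFt, hkF]
    rfl
  have approx (n : ℕ) : ∃ F : Lp ℂ 2 μ₊ →L[ℂ] Lp ℂ 2 μ₊,
      FiniteDimensional ℂ (LinearMap.range (F : Lp ℂ 2 μ₊ →ₗ[ℂ] Lp ℂ 2 μ₊)) ∧
        ‖H - F‖ ≤ 1 / (n + 1) := by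
    obtain ⟨m, c, hmc⟩ :=
      exists_expSum_lintegral_sub_le hk.integrableOn (Nat.one_div_pos_of_nat (α := ℝ) (n := n))
    refine ⟨expSumOp m c, finiteDimensional_range_sum_smulRight _ _ _,
      Lp.opNorm_le_of_eLpNorm_le (by positivity) fun f => ?_⟩
    rw [eLpNorm_congr_ae (hHF m c f)]
    refine (eLpNorm_hankelIntegral_le (hk.integrableOn.sub (integrableOn_expSum m c)).1
      (Lp.aestronglyMeasurable f)).trans ?_
    gcongr
    exact hmc
  choose F hF hFH using approx
  exact ⟨F, hF, squeeze_zero (fun n => norm_nonneg _) hFH tendsto_one_div_add_atTop_nhds_zero_nat⟩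

/-- The Hankel operator `(H f)(t) = ∫₀^∞ k(t+τ) f(τ) dτ` with `k ∈ L¹(ℝ₊)` is the
limit in operator norm of a sequence of finite-rank operators. -/
theorem stmt8 (k : ℝ → ℂ) (hk : Integrable k) (hks : ∀ t < (0 : ℝ), k t = 0)
    (H : Lp ℂ 2 (volume.restrict (Ici (0:ℝ))) →L[ℂ] Lp ℂ 2 (volume.restrict (Ici (0:ℝ))))
    (hH : ∀ f : Lp ℂ 2 (volume.restrict (Ici (0:ℝ))),
      ⇑(H f) =ᵐ[volume.restrict (Ici (0:ℝ))]
        fun t => ∫ τ in Ici (0:ℝ), k (t + τ) * f τ) :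
    ∃ F : ℕ → (Lp ℂ 2 (volume.restrict (Ici (0:ℝ))) →L[ℂ]
        Lp ℂ 2 (volume.restrict (Ici (0:ℝ)))),
      (∀ n, FiniteDimensional ℂ (LinearMap.range ((F n : Lp ℂ 2 (volume.restrict (Ici (0:ℝ))) →ₗ[ℂ]
        Lp ℂ 2 (volume.restrict (Ici (0:ℝ))))))) ∧
      Tendsto (fun n => ‖H - F n‖) atTop (nhds 0) :=
  stmt8_general k hk H hH
end
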